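/- Let 𝒞 ⊆ 𝔞 be a nonempty finitely generated convex set with asymptotic cone C, and let 𝔟 ⊆ 𝔞 be a linear subspace such that dim(C∨ + 𝔟) = dim 𝔞. Let ξ ∈ 𝔟⊥ be such that ξ ∈ p⊥(C∨), and assume ξ is in general position in the following sense: for every face F of 𝒞 such that the dimension of the linear span of p⊥(𝔞_F^+) is strictly smaller than dim 𝔟⊥, one has ξ ∉ p⊥(𝔞_F^+). Then the orthogonal projection p induces a bijection between ⋃_{F ∈ ℱ(𝒞,ξ)} F and p(𝒞). -/

import Mathlib

open Pointwise

variable {E : Type*} [NormedAddCommGroup E] [InnerProductSpace ℝ E] [FiniteDimensional ℝ E]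

/-- A finitely generated convex set: a finite intersection of closed half-spaces. -/
def IsFGConvex (C : Set E) : Prop :=
  ∃ s : Finset (E × ℝ), C = {X | ∀ p ∈ s, (inner ℝ p.1 X : ℝ) ≤ p.2}

/-- The tangent cone `T_C(H) = ℝ≥0 · (C - H)`. -/
def tangCone (C : Set E) (H : E) : Set E :=
  {X | ∃ t : ℝ, 0 ≤ t ∧ ∃ c ∈ C, X = t • (c - H)}

/-- The normal cone `N_C(H) = {Y | (Y,X) ≤ 0 for all X ∈ T_C(H)}`. -/
def normCone (C : Set E) (H : E) : Set E :=
  {Y | ∀ X ∈ tangCone C H, (inner ℝ Y X : ℝ) ≤ 0}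

/-- The asymptotic cone of `C`: the set of `X` with `C + ℝ≥0 · X = C`. -/
def asympCone (C : Set E) : Set E :=
  {X | C + {Y | ∃ t : ℝ, 0 ≤ t ∧ Y = t • X} = C}

/-- The dual cone `C∨ = {Y | (Y,X) ≤ 0 for all X ∈ C}`. -/
def polarCone (C : Set E) : Set E :=
  {Y | ∀ X ∈ C, (inner ℝ Y X : ℝ) ≤ 0}

/-- A face of `C`: the (nonempty) intersection of `C` with a supporting affine hyperplane
`{H | (λ,H) = c}`, where `(λ,H) ≤ c` on all of `C` (the case `λ = 0` being allowed). -/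
def IsFace (C F : Set E) : Prop :=
  F.Nonempty ∧ ∃ (lam : E) (c : ℝ), (∀ H ∈ C, (inner ℝ lam H : ℝ) ≤ c) ∧
    F = {H | H ∈ C ∧ (inner ℝ lam H : ℝ) = c}

/-- `𝔞_F^+`: the relative interior of the normal cone `N_C(X_F)`, for `X_F` in the relative
interior of the face `F` (this normal cone does not depend on the choice of such `X_F`). -/
def aFplus (C F : Set E) : Set E :=
  ⋃ X ∈ intrinsicInterior ℝ F, intrinsicInterior ℝ (normCone C X)


/-- The orthogonal projection onto a subspace `b`, viewed as a map `E → E`. -/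
noncomputable def projOn (b : Submodule ℝ E) (x : E) : E :=
  (b.orthogonalProjection x : E)

/-!
Write `𝒞 = {x | ∀ i, ⟪a i, x⟫ ≤ c i}`. Two tools drive everything: Farkas' lemma (a finitely
generated cone is closed, by Carathéodory), and its consequence that the normal cone of `𝒞` at `H`
is the cone on the normals of the constraints active at `H`; an `η` maximized on `𝒞` exactly on a
face `G` lies in `𝔞_G^+`.

Injectivity: if `H₁ ∈ F₁`, `H₂ ∈ F₂` have the same image under `p`, then `H₂ - H₁ ∈ 𝔟⊥`, on
which the lifts `η₁ ∈ 𝔞_{F₁}^+`, `η₂ ∈ 𝔞_{F₂}^+` of `ξ` agree. As `η₁` is maximized at `H₁` and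
`η₂` at `H₂`, both points maximize `η₁`, so they lie on the face `G` where `η₁` is maximal. Every
element of `𝔞_G^+` is constant on `G`, so `p⊥(𝔞_G^+) ⊥ H₂ - H₁`, and general position forces
`H₁ = H₂`.

Surjectivity: `ξ ∈ p⊥(C∨)` bounds `⟪ξ, ·⟫` on the fibre `𝒞 ∩ (H₀ + 𝔟⊥)`, a polyhedron in `𝔟⊥`,
so it attains its maximum at some `H`. By Farkas, `ξ` is then a nonnegative combination of the
projections of the constraints active at `H`; the same combination `η` of the constraints
themselves is maximized at `H`, and `H` lies on the face where `η` is maximal, with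
`η ∈ 𝔞^+` of that face and `p⊥ η = ξ`.
-/

open RealInnerProductSpace Filter Topology

section ConicHull

variable {F : Type*} [AddCommGroup F] [Module ℝ F] {ι : Type*}

/-- Carathéodory's theorem for cones. -/
lemma exists_linearIndepOn_sum_eq (v : ι → F) (τ : Finset ι) (t : ι → ℝ)
    (ht : ∀ i ∈ τ, 0 ≤ t i) :
    ∃ σ : Finset ι, LinearIndepOn ℝ v σ ∧
      ∃ u : ι → ℝ, (∀ i ∈ σ, 0 ≤ u i) ∧ ∑ i ∈ σ, u i • v i = ∑ i ∈ τ, t i • v i := by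
  classical
  induction τ using Finset.strongInduction generalizing t with
  | H τ ih =>
  by_cases hτ : LinearIndepOn ℝ v τ
  · exact ⟨τ, hτ, t, ht, rfl⟩
  obtain ⟨g, hg, j, hjτ, hj⟩ : ∃ g : ι → ℝ, ∑ i ∈ τ, g i • v i = 0 ∧ ∃ j ∈ τ, 0 < g j := by
    obtain ⟨g, hg, j, hjτ, hj⟩ := not_linearIndepOn_finset_iff.mp hτ
    rcases hj.lt_or_gt with h | h
    · exact ⟨-g, by simp [neg_smul, hg], j, hjτ, by simpa using h⟩
    · exact ⟨g, hg, j, hjτ, h⟩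
  -- move along the relation `g` until the first coefficient, at `k`, vanishes
  obtain ⟨k, hk, hmin⟩ := (τ.filter (0 < g ·)).exists_min_image (fun i => t i / g i)
    ⟨j, Finset.mem_filter.mpr ⟨hjτ, hj⟩⟩
  rw [Finset.mem_filter] at hk
  set θ := t k / g k
  have hθ : 0 ≤ θ := div_nonneg (ht k hk.1) hk.2.le
  obtain ⟨σ, hσ, u, hu, hsum⟩ := ih (τ.erase k) (Finset.erase_ssubset hk.1) (t - θ • g) (by
    intro i hi
    have hiτ := Finset.mem_of_mem_erase hi
    simp only [Pi.sub_apply, Pi.smul_apply, smul_eq_mul, sub_nonneg]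
    rcases le_or_gt (g i) 0 with hgi | hgi
    · nlinarith [ht i hiτ]
    · exact (le_div_iff₀ hgi).mp (hmin i (Finset.mem_filter.mpr ⟨hiτ, hgi⟩)))
  refine ⟨σ, hσ, u, hu, hsum.trans ?_⟩
  rw [Finset.sum_erase τ (by simp [θ, div_mul_cancel₀ _ hk.2.ne'])]
  simp [sub_smul, mul_smul, Finset.sum_sub_distrib, ← Finset.smul_sum, hg]

variable [Fintype ι]

def conicHull (v : ι → F) : Set F :=
  Fintype.linearCombination ℝ v '' Set.Ici 0

lemma mem_conicHull {v : ι → F} {x : F} :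
    x ∈ conicHull v ↔ ∃ t : ι → ℝ, (∀ i, 0 ≤ t i) ∧ ∑ i, t i • v i = x := by
  simp [conicHull, Pi.le_def, Fintype.linearCombination_apply]

lemma convex_conicHull (v : ι → F) : Convex ℝ (conicHull v) :=
  (convex_Ici 0).linear_image _

lemma zero_mem_conicHull (v : ι → F) : (0 : F) ∈ conicHull v :=
  ⟨0, Set.mem_Ici.mpr le_rfl, map_zero _⟩

lemma smul_mem_conicHull (v : ι → F) (i : ι) {r : ℝ} (hr : 0 ≤ r) : r • v i ∈ conicHull v := by
  classical
  refine mem_conicHull.mpr ⟨Pi.single i r, fun j => ?_, by simp⟩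
  rcases eq_or_ne j i with rfl | hj <;> simp [*]

lemma conicHull_comp_subset {κ : Type*} [Fintype κ] (v : ι → F) (f : κ → ι) :
    conicHull (v ∘ f) ⊆ conicHull v := by
  classical
  rintro x hx
  obtain ⟨t, ht, rfl⟩ := mem_conicHull.mp hx
  refine mem_conicHull.mpr ⟨fun i => ∑ k with f k = i, t k,
    fun i => Finset.sum_nonneg fun k _ => ht k, ?_⟩
  calc ∑ i, (∑ k with f k = i, t k) • v i = ∑ i, ∑ k with f k = i, t k • v (f k) := by
        simp_rw [Finset.sum_smul]
        exact Finset.sum_congr rfl fun i _ => Finset.sum_congr rfl fun k hk => by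
          rw [(Finset.mem_filter.mp hk).2]
    _ = ∑ k, t k • (v ∘ f) k := Finset.sum_fiberwise _ _ _

lemma conicHull_comp_linearMap {G : Type*} [AddCommGroup G] [Module ℝ G] (v : ι → F)
    (f : F →ₗ[ℝ] G) :
    conicHull (f ∘ v) = f '' conicHull v := by
  ext y
  simp only [mem_conicHull, Set.mem_image]
  constructor
  · rintro ⟨t, ht, rfl⟩
    exact ⟨_, ⟨t, ht, rfl⟩, by simp [map_sum]⟩
  · rintro ⟨_, ⟨t, ht, rfl⟩, rfl⟩
    exact ⟨t, ht, by simp [map_sum]⟩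

end ConicHull

section NormedSpace

variable {F : Type*} [NormedAddCommGroup F] [NormedSpace ℝ F] {ι : Type*} [Fintype ι]

lemma isClosed_conicHull_of_linearIndependent {v : ι → F} (hv : LinearIndependent ℝ v) :
    IsClosed (conicHull v) :=
  (LinearMap.isClosedEmbedding_of_injective (LinearMap.ker_eq_bot.mpr
    hv.fintypeLinearCombination_injective)).isClosedMap _ isClosed_Ici

lemma isClosed_conicHull (v : ι → F) : IsClosed (conicHull v) := by
  have : conicHull v = ⋃ σ ∈ {σ : Finset ι | LinearIndepOn ℝ v σ},
      conicHull (v ∘ ((↑) : σ → ι)) := by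
    refine subset_antisymm (fun x hx => ?_)
      (Set.iUnion₂_subset fun σ _ => conicHull_comp_subset v _)
    obtain ⟨t, ht, rfl⟩ := mem_conicHull.mp hx
    obtain ⟨σ, hσ, u, hu, hsum⟩ := exists_linearIndepOn_sum_eq v Finset.univ t (fun i _ => ht i)
    refine Set.mem_iUnion₂.mpr ⟨σ, hσ, mem_conicHull.mpr ⟨fun i => u i, fun i => hu i i.2, ?_⟩⟩
    rw [← hsum, ← Finset.sum_coe_sort σ]
    rfl
  rw [this]
  exact (Set.toFinite _).isClosed_biUnion fun σ hσ => isClosed_conicHull_of_linearIndependent hσ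

/-- Farkas' lemma. -/
theorem mem_conicHull_of_forall_le {v : ι → F} {x : F}
    (h : ∀ f : F →L[ℝ] ℝ, (∀ i, f (v i) ≤ 0) → f x ≤ 0) : x ∈ conicHull v := by
  by_contra hx
  obtain ⟨f, u, hfK, hfx⟩ :=
    geometric_hahn_banach_closed_point (convex_conicHull v) (isClosed_conicHull v) hx
  have hu : 0 < u := by simpa using hfK 0 (zero_mem_conicHull v)
  refine (h f fun i => ?_).not_gt (hu.trans hfx)
  by_contra! hfv
  have := hfK _ (smul_mem_conicHull v i (div_nonneg hu.le hfv.le))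
  rw [map_smul, smul_eq_mul, div_mul_cancel₀ _ hfv.ne'] at this
  exact this.false

lemma sum_smul_mem_intrinsicInterior_conicHull (v : ι → F) {t : ι → ℝ} (ht : ∀ i, 0 < t i) :
    ∑ i, t i • v i ∈ intrinsicInterior ℝ (conicHull v) := by
  set W := Submodule.span ℝ (Set.range v)
  have : FiniteDimensional ℝ W := FiniteDimensional.span_of_finite ℝ (Set.finite_range v)
  have hW : ∀ u : ι → ℝ, ∑ i, u i • v i ∈ W := fun u =>
    Submodule.sum_mem _ fun i _ => Submodule.smul_mem _ _ (Submodule.subset_span ⟨i, rfl⟩)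
  have hA : (affineSpan ℝ (conicHull v) : Set F) = W := by
    rw [← Set.insert_eq_of_mem (zero_mem_conicHull v), affineSpan_insert_zero]
    congr 1
    refine le_antisymm (Submodule.span_le.mpr ?_) (Submodule.span_mono ?_)
    · rintro _ ⟨u, -, rfl⟩
      simpa [Fintype.linearCombination_apply] using hW u
    · rintro _ ⟨i, rfl⟩
      simpa using smul_mem_conicHull v i zero_le_one
  -- the positive orthant maps onto a relatively open subset of the cone
  let L : (ι → ℝ) →ₗ[ℝ] W := (Fintype.linearCombination ℝ v).codRestrict W fun u => by
    simpa [Fintype.linearCombination_apply] using hW u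
  have hL : Function.Surjective L := fun ⟨x, hx⟩ => by
    obtain ⟨u, rfl⟩ := (Submodule.mem_span_range_iff_exists_fun ℝ).mp hx
    exact ⟨u, Subtype.ext (Fintype.linearCombination_apply ℝ v u)⟩
  set U := ⋂ i, {u : ι → ℝ | 0 < u i}
  have hU : IsOpen U :=
    isOpen_iInter_of_finite fun i => isOpen_lt continuous_const (continuous_apply i)
  obtain ⟨O, hO, hOL⟩ := isOpen_induced_iff.mp (L.isOpenMap_of_finiteDimensional hL U hU)
  have hmem : ∀ x ∈ O, x ∈ (W : Set F) → x ∈ conicHull v := fun x hxO hxW => by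
    obtain ⟨u, hu, hux⟩ : (⟨x, hxW⟩ : W) ∈ L '' U := hOL ▸ hxO
    exact ⟨u, fun i => (Set.mem_iInter.mp hu i).le, congrArg Subtype.val hux⟩
  have htA : ∑ i, t i • v i ∈ (affineSpan ℝ (conicHull v) : Set F) := by
    rw [hA]
    exact hW t
  rw [mem_intrinsicInterior]
  refine ⟨⟨_, htA⟩, interior_maximal (t := Subtype.val ⁻¹' O) (fun y hy => ?_)
    (hO.preimage continuous_subtype_val) ?_, rfl⟩
  · exact hmem y hy (hA ▸ y.2)
  · have : (⟨_, hW t⟩ : W) ∈ L '' U :=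
      ⟨t, Set.mem_iInter.mpr ht, Subtype.ext (Fintype.linearCombination_apply ℝ v t)⟩
    exact (hOL ▸ this : _)

lemma exists_pos_add_smul_sub_mem_of_mem_intrinsicInterior {s : Set F} {x y : F}
    (hx : x ∈ intrinsicInterior ℝ s) (hy : y ∈ s) : ∃ ε : ℝ, 0 < ε ∧ x + ε • (x - y) ∈ s := by
  obtain ⟨x', hx', rfl⟩ := mem_intrinsicInterior.mp hx
  have hline : ∀ r : ℝ, x' + r • ((x' : F) - y) ∈ affineSpan ℝ s := fun r => by
    simpa [vsub_eq_sub, vadd_eq_add, add_comm] using AffineSubspace.smul_vsub_vadd_mem _ r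
      x'.2 (subset_affineSpan ℝ s hy) x'.2
  let γ : ℝ → affineSpan ℝ s := fun r => ⟨_, hline r⟩
  have hγ : Continuous γ := by fun_prop
  have : ∀ᶠ r in 𝓝 0, γ r ∈ interior (Subtype.val ⁻¹' s) :=
    hγ.continuousAt.preimage_mem_nhds (by simpa [γ] using isOpen_interior.mem_nhds hx')
  obtain ⟨ε, hεs, hε⟩ :=
    ((this.filter_mono nhdsWithin_le_nhds).and (self_mem_nhdsWithin (s := Set.Ioi 0))).exists
  exact ⟨ε, hε, interior_subset (s := Subtype.val ⁻¹' s) hεs⟩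

end NormedSpace

section InnerProductSpace

variable {V : Type*} [NormedAddCommGroup V] [InnerProductSpace ℝ V] {ι : Type*}

def polyhedron (a : ι → V) (c : ι → ℝ) : Set V :=
  {x | ∀ i, ⟪a i, x⟫ ≤ c i}

lemma convex_polyhedron (a : ι → V) (c : ι → ℝ) : Convex ℝ (polyhedron a c) := by
  have : polyhedron a c = ⋂ i, {x | ⟪a i, x⟫ ≤ c i} := by ext; simp [polyhedron]
  rw [this]
  exact convex_iInter fun i => convex_halfSpace_le (innerₛₗ ℝ (a i)).isLinear (c i)

variable [Fintype ι]

theorem mem_conicHull_of_forall_inner_le [CompleteSpace V] {v : ι → V} {x : V}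
    (h : ∀ w, (∀ i, ⟪v i, w⟫ ≤ 0) → ⟪x, w⟫ ≤ 0) : x ∈ conicHull v := by
  refine mem_conicHull_of_forall_le fun f hf => ?_
  have hw : ∀ y, ⟪y, (InnerProductSpace.toDual ℝ V).symm f⟫ = f y := fun y => by
    rw [real_inner_comm, InnerProductSpace.toDual_symm_apply]
  have := h ((InnerProductSpace.toDual ℝ V).symm f) fun i => (hw (v i)).trans_le (hf i)
  rwa [hw] at this

lemma inner_sum_smul_le {a : ι → V} {c t : ι → ℝ} {x : V} (ht : ∀ i, 0 ≤ t i)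
    (hx : x ∈ polyhedron a c) : ⟪∑ i, t i • a i, x⟫ ≤ ∑ i, t i * c i := by
  rw [sum_inner]
  exact Finset.sum_le_sum fun i _ => by
    rw [real_inner_smul_left]
    exact mul_le_mul_of_nonneg_left (hx i) (ht i)

/-- Gale's theorem of the alternative. -/
theorem exists_certificate_of_polyhedron_eq_empty [CompleteSpace V] {a : ι → V} {c : ι → ℝ}
    (h : polyhedron a c = ∅) :
    ∃ t : ι → ℝ, (∀ i, 0 ≤ t i) ∧ ∑ i, t i • a i = 0 ∧ ∑ i, t i * c i < 0 := by
  let v : Option ι → V × ℝ := fun o => o.elim (0, 1) fun i => (a i, c i)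
  have hmem : ((0 : V), (-1 : ℝ)) ∈ conicHull v := by
    refine mem_conicHull_of_forall_le fun f hf => ?_
    by_contra! hpos
    set s := f (0, 1)
    set w := (InnerProductSpace.toDual ℝ V).symm (f.comp (ContinuousLinearMap.inl ℝ V ℝ))
    have hf_apply : ∀ y r, f (y, r) = ⟪w, y⟫ + r * s := fun y r => by
      have : ((y, r) : V × ℝ) = (y, 0) + r • (0, 1) := by ext <;> simp
      rw [this, map_add, map_smul, InnerProductSpace.toDual_symm_apply]
      rfl
    have hs : s < 0 := by
      have : ((0 : V), (-1 : ℝ)) = (-1 : ℝ) • (0, 1) := by ext <;> simp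
      rw [this, map_smul, smul_eq_mul] at hpos
      linarith
    -- `(-s)⁻¹ • w` would lie in the empty polyhedron
    have hx : (-s)⁻¹ • w ∈ polyhedron a c := fun i => by
      have := hf (some i)
      simp only [v, Option.elim_some, hf_apply] at this
      rw [real_inner_smul_right, real_inner_comm, inv_mul_le_iff₀ (by linarith)]
      nlinarith
    simp [h] at hx
  obtain ⟨t, ht, hsum⟩ := mem_conicHull.mp hmem
  simp only [Fintype.sum_option, v, Option.elim_none, Option.elim_some, Prod.ext_iff,
    Prod.fst_add, Prod.snd_add, Prod.fst_sum, Prod.snd_sum, Prod.smul_fst, Prod.smul_snd,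
    smul_zero, zero_add, smul_eq_mul, mul_one] at hsum
  exact ⟨fun i => t (some i), fun i => ht _, hsum.1, by linarith [ht none]⟩

theorem exists_isMaxOn_polyhedron [CompleteSpace V] {a : ι → V} {c : ι → ℝ} {ξ : V}
    (hne : (polyhedron a c).Nonempty) (hrec : ∀ w, (∀ i, ⟪a i, w⟫ ≤ 0) → ⟪ξ, w⟫ ≤ 0) :
    ∃ H ∈ polyhedron a c, IsMaxOn (inner ℝ ξ) (polyhedron a c) H := by
  set P := polyhedron a c
  obtain ⟨t, ht, hξ⟩ := mem_conicHull.mp (mem_conicHull_of_forall_inner_le hrec)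
  have hbdd : BddAbove (inner ℝ ξ '' P) :=
    ⟨_, Set.forall_mem_image.mpr fun x hx => hξ ▸ inner_sum_smul_le ht hx⟩
  set m := sSup (inner ℝ ξ '' P)
  have hle : ∀ x ∈ P, ⟪ξ, x⟫ ≤ m := fun x hx => le_csSup hbdd ⟨x, hx, rfl⟩
  -- otherwise `P ∩ {x | m ≤ ⟪ξ, x⟫}` is empty, and Gale's certificate contradicts `m = sup`
  by_contra! hmax
  have hempty : polyhedron (fun o : Option ι => o.elim (-ξ) a) (fun o => o.elim (-m) c) = ∅ := by
    refine Set.eq_empty_of_forall_notMem fun x hx => ?_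
    obtain ⟨y, hy, hxy⟩ : ∃ y ∈ P, ⟪ξ, x⟫ < ⟪ξ, y⟫ := by
      simpa [isMaxOn_iff] using hmax x fun i => hx (some i)
    have := hx none
    simp only [Option.elim_none, inner_neg_left, neg_le_neg_iff] at this
    exact (hle y hy).not_gt (this.trans_lt hxy)
  obtain ⟨u, hu, hsum, hval⟩ := exists_certificate_of_polyhedron_eq_empty hempty
  simp only [Fintype.sum_option, Option.elim_none, Option.elim_some, smul_neg,
    neg_add_eq_zero, mul_neg] at hsum hval
  have hbound : ∀ x ∈ P, u none * ⟪ξ, x⟫ ≤ ∑ i, u (some i) * c i := fun x hx => by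
    rw [← real_inner_smul_left, hsum]
    exact inner_sum_smul_le (fun i => hu _) hx
  rcases (hu none).eq_or_lt with h0 | h0
  · obtain ⟨x₀, hx₀⟩ := hne
    have := hbound x₀ hx₀
    rw [← h0] at this hval
    linarith
  · have : m ≤ (∑ i, u (some i) * c i) / u none :=
      csSup_le (hne.image _) (Set.forall_mem_image.mpr fun x hx =>
        (le_div_iff₀' h0).mpr (hbound x hx))
    linarith [(le_div_iff₀' h0).mp this]

lemma exists_pos_coeff_of_mem_conicHull [CompleteSpace V] {v : ι → V} {η : V}
    (hη : η ∈ conicHull v) (h : ∀ w, (∀ i, ⟪v i, w⟫ ≤ 0) → ⟪η, w⟫ = 0 → ∀ i, ⟪v i, w⟫ = 0)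
    (j : ι) : ∃ t : ι → ℝ, (∀ i, 0 ≤ t i) ∧ 0 < t j ∧ ∑ i, t i • v i = η := by
  classical
  obtain ⟨t₀, ht₀, hη₀⟩ := mem_conicHull.mp hη
  by_cases hj : -v j ∈ conicHull (fun o : Option ι => o.elim (-η) v)
  · -- with `s = u none`: `s • η = v j + ∑ i, u i • v i`, so
    -- `(1 + s) • η = ∑ i, (t₀ i + u i + δ i j) • v i`
    obtain ⟨u, hu, hsum⟩ := mem_conicHull.mp hj
    simp only [Fintype.sum_option, Option.elim_none, Option.elim_some, smul_neg] at hsum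
    have hs : 0 < 1 + u none := by linarith [hu none]
    refine ⟨fun i => (t₀ i + u (some i) + if i = j then 1 else 0) / (1 + u none),
      fun i => div_nonneg (add_nonneg (add_nonneg (ht₀ i) (hu _)) (by split_ifs <;> norm_num))
        hs.le,
      div_pos (by simp only [if_pos]; linarith [ht₀ j, hu (some j)]) hs, ?_⟩
    simp only [div_eq_inv_mul, mul_smul, ← Finset.smul_sum, add_smul, Finset.sum_add_distrib,
      ite_smul, one_smul, zero_smul, Finset.sum_ite_eq', Finset.mem_univ, if_true, hη₀]
    rw [show ∑ i, u (some i) • v i = u none • η - v j by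
      linear_combination (norm := module) hsum,
      show η + (u none • η - v j) + v j = (1 + u none) • η by module,
      smul_smul, inv_mul_cancel₀ hs.ne', one_smul]
  · obtain ⟨w, hw, hwj⟩ : ∃ w, (∀ o : Option ι, ⟪o.elim (-η) v, w⟫ ≤ 0) ∧ 0 < ⟪-v j, w⟫ := by
      by_contra! H
      exact hj (mem_conicHull_of_forall_inner_le H)
    have hvw : ∀ i, ⟪v i, w⟫ ≤ 0 := fun i => hw (some i)
    have hηw : ⟪η, w⟫ = 0 := by
      refine le_antisymm ?_ (by simpa using hw none)
      simpa [hη₀] using inner_sum_smul_le (c := 0) ht₀ hvw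
    linarith [h w hvw hηw j, inner_neg_left (𝕜 := ℝ) (v j) w]

lemma mem_intrinsicInterior_conicHull [CompleteSpace V] {v : ι → V} {η : V}
    (hη : η ∈ conicHull v) (h : ∀ w, (∀ i, ⟪v i, w⟫ ≤ 0) → ⟪η, w⟫ = 0 → ∀ i, ⟪v i, w⟫ = 0) :
    η ∈ intrinsicInterior ℝ (conicHull v) := by
  obtain ⟨t₀, ht₀, hη₀⟩ := mem_conicHull.mp hη
  choose T hT hTpos hTsum using exists_pos_coeff_of_mem_conicHull hη h
  set n : ℝ := (Fintype.card ι : ℝ)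
  -- average the representations `t₀` and `T j` of `η`
  have havg : ∑ i, ((t₀ i + ∑ j, T j i) / (1 + n)) • v i = η := by
    simp only [div_eq_inv_mul, mul_smul, ← Finset.smul_sum, add_smul, Finset.sum_add_distrib,
      Finset.sum_smul]
    rw [Finset.sum_comm, hη₀]
    simp only [hTsum, Finset.sum_const, Finset.card_univ]
    rw [← Nat.cast_smul_eq_nsmul ℝ, show η + n • η = (1 + n) • η by module, smul_smul,
      inv_mul_cancel₀ (by positivity), one_smul]
  rw [← havg]
  refine sum_smul_mem_intrinsicInterior_conicHull v fun i => div_pos ?_ (by positivity)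
  exact add_pos_of_nonneg_of_pos (ht₀ i)
    ((hTpos i).trans_le (Finset.single_le_sum (fun j _ => hT j i) (Finset.mem_univ i)))

end InnerProductSpace

section Polyhedron

variable {V : Type*} [NormedAddCommGroup V] [InnerProductSpace ℝ V]

lemma mem_normCone_iff_isMaxOn {C : Set V} {X η : V} :
    η ∈ normCone C X ↔ IsMaxOn (inner ℝ η) C X := by
  refine ⟨fun h x hx => ?_, fun h => ?_⟩
  · have := h (x - X) ⟨1, zero_le_one, x, hx, (one_smul ℝ _).symm⟩
    rw [inner_sub_right, sub_nonpos] at this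
    exact this
  · rintro _ ⟨t, ht, x, hx, rfl⟩
    rw [real_inner_smul_right, inner_sub_right]
    exact mul_nonpos_of_nonneg_of_nonpos ht (sub_nonpos.mpr (h hx))

lemma isMaxOn_of_mem_aFplus {C F : Set V} {η H : V} (hFC : F ⊆ C) (hη : η ∈ aFplus C F)
    (hH : H ∈ F) : IsMaxOn (inner ℝ η) C H := by
  obtain ⟨X, hX, hηX⟩ := Set.mem_iUnion₂.mp hη
  have hmax := mem_normCone_iff_isMaxOn.mp (intrinsicInterior_subset hηX)
  -- `X` lies in the relative interior of `F`, so `⟪η, ·⟫` cannot drop from `X` to `H ∈ F`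
  obtain ⟨ε, hε, hXε⟩ := exists_pos_add_smul_sub_mem_of_mem_intrinsicInterior hX hH
  have := isMaxOn_iff.mp hmax _ (hFC hXε)
  simp only [inner_add_right, real_inner_smul_right, inner_sub_right] at this
  have hXH : ⟪η, X⟫ ≤ ⟪η, H⟫ := by nlinarith
  exact fun x hx => (hmax hx).trans hXH

lemma IsFace.subset {C F : Set V} (h : IsFace C F) : F ⊆ C := by
  obtain ⟨-, lam, c, -, rfl⟩ := h
  exact fun x hx => hx.1

lemma IsFGConvex.exists_eq_polyhedron {C : Set V} (hC : IsFGConvex C) :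
    ∃ s : Finset (V × ℝ), C = polyhedron (fun p : s => p.1.1) fun p => p.1.2 := by
  obtain ⟨s, rfl⟩ := hC
  exact ⟨s, by ext; simp [polyhedron]⟩

lemma isFace_of_isMaxOn {C : Set V} {η X : V} (hX : X ∈ C) (hmax : IsMaxOn (inner ℝ η) C X) :
    IsFace C {x | x ∈ C ∧ ⟪η, x⟫ = ⟪η, X⟫} :=
  ⟨⟨X, hX, rfl⟩, η, _, fun _ hx => hmax hx, rfl⟩

variable {ι : Type*} {a : ι → V} {c : ι → ℝ}

lemma mem_asympCone_polyhedron {w : V} (hw : ∀ i, ⟪a i, w⟫ ≤ 0) :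
    w ∈ asympCone (polyhedron a c) := by
  refine Set.Subset.antisymm ?_
    fun x hx => ⟨x, hx, 0, ⟨0, le_rfl, (zero_smul ℝ w).symm⟩, add_zero x⟩
  rintro _ ⟨x, hx, _, ⟨t, ht, rfl⟩, rfl⟩ i
  rw [inner_add_right, real_inner_smul_right]
  nlinarith [hx i, hw i]

-- Inactive constraints contribute `0`, which leaves the cone spanned by the family unchanged.
noncomputable def activeNormals (a : ι → V) (c : ι → ℝ) (H : V) (i : ι) : V :=
  if ⟪a i, H⟫ = c i then a i else 0

variable [Fintype ι]

lemma eventually_add_smul_mem_polyhedron {H w : V} (hH : H ∈ polyhedron a c)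
    (hw : ∀ i, ⟪a i, H⟫ = c i → ⟪a i, w⟫ ≤ 0) :
    ∀ᶠ ε in 𝓝[>] (0 : ℝ), H + ε • w ∈ polyhedron a c := by
  refine eventually_all.mpr fun i => ?_
  rcases (hH i).eq_or_lt with hi | hi
  · filter_upwards [self_mem_nhdsWithin] with ε (hε : 0 < ε)
    rw [inner_add_right, real_inner_smul_right]
    nlinarith [hw i hi]
  · have hcont : Continuous fun ε : ℝ => ⟪a i, H + ε • w⟫ := by fun_prop
    exact nhdsWithin_le_nhds <| (hcont.continuousAt.eventually_lt
      (continuous_const (y := c i)).continuousAt (by simpa using hi)).mono fun _ => le_of_lt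

lemma normCone_polyhedron [CompleteSpace V] {H : V} (hH : H ∈ polyhedron a c) :
    normCone (polyhedron a c) H = conicHull (activeNormals a c H) := by
  ext η
  rw [mem_normCone_iff_isMaxOn]
  constructor
  · refine fun hmax => mem_conicHull_of_forall_inner_le fun w hw => ?_
    obtain ⟨ε, hεP, hε⟩ := ((eventually_add_smul_mem_polyhedron hH fun i hi => by
      simpa [activeNormals, hi] using hw i).and self_mem_nhdsWithin).exists
    have := isMaxOn_iff.mp hmax _ hεP
    simp only [inner_add_right, real_inner_smul_right] at this
    nlinarith [show (0 : ℝ) < ε from hε]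
  · rintro hη x hx
    obtain ⟨t, ht, rfl⟩ := mem_conicHull.mp hη
    have hx' : x ∈ polyhedron (activeNormals a c H) fun i => ⟪activeNormals a c H i, H⟫ :=
      fun i => by
        by_cases hi : ⟪a i, H⟫ = c i
        · simpa [activeNormals, hi] using hx i
        · simp [activeNormals, hi]
    simpa [sum_inner, real_inner_smul_left] using inner_sum_smul_le ht hx'

lemma mem_intrinsicInterior_normCone_polyhedron [CompleteSpace V] {η X : V}
    (hX : X ∈ polyhedron a c) (hmax : IsMaxOn (inner ℝ η) (polyhedron a c) X)
    (hrel : X ∈ intrinsicInterior ℝ {x | x ∈ polyhedron a c ∧ ⟪η, x⟫ = ⟪η, X⟫}) :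
    η ∈ intrinsicInterior ℝ (normCone (polyhedron a c) X) := by
  rw [normCone_polyhedron hX]
  refine mem_intrinsicInterior_conicHull
    (normCone_polyhedron hX ▸ mem_normCone_iff_isMaxOn.mpr hmax) fun w hw hηw i => ?_
  -- moving from `X` along `w` stays in the face; since `X` is relatively interior,
  -- so does moving along `-w`, which forces `⟪a i, w⟫ = 0` on active constraints
  obtain ⟨ε, hεP, hε⟩ := ((eventually_add_smul_mem_polyhedron hX fun i hi => by
    simpa [activeNormals, hi] using hw i).and self_mem_nhdsWithin).exists
  have hεF : X + ε • w ∈ {x | x ∈ polyhedron a c ∧ ⟪η, x⟫ = ⟪η, X⟫} :=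
    ⟨hεP, by rw [inner_add_right, real_inner_smul_right, hηw, mul_zero, add_zero]⟩
  obtain ⟨δ, hδ, hδF⟩ := exists_pos_add_smul_sub_mem_of_mem_intrinsicInterior hrel hεF
  refine le_antisymm (hw i) ?_
  by_cases hi : ⟪a i, X⟫ = c i
  · have := hδF.1 i
    simp only [activeNormals, hi, if_true, inner_add_right, inner_sub_right,
      real_inner_smul_right] at this ⊢
    nlinarith [mul_pos hδ (show (0 : ℝ) < ε from hε)]
  · simp [activeNormals, hi]

lemma isFace_and_mem_aFplus_of_isMaxOn [FiniteDimensional ℝ V] {η X : V}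
    (hX : X ∈ polyhedron a c) (hmax : IsMaxOn (inner ℝ η) (polyhedron a c) X) :
    IsFace (polyhedron a c) {x | x ∈ polyhedron a c ∧ ⟪η, x⟫ = ⟪η, X⟫} ∧
      η ∈ aFplus (polyhedron a c) {x | x ∈ polyhedron a c ∧ ⟪η, x⟫ = ⟪η, X⟫} := by
  set G := {x | x ∈ polyhedron a c ∧ ⟪η, x⟫ = ⟪η, X⟫}
  have hGconv : Convex ℝ G := (convex_polyhedron a c).inter (convex_hyperplane
    (innerₛₗ ℝ η).isLinear _)
  obtain ⟨Z, hZ⟩ := (intrinsicInterior_nonempty hGconv).mpr ⟨X, hX, rfl⟩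
  have hZG : Z ∈ G := intrinsicInterior_subset hZ
  have hGZ : G = {x | x ∈ polyhedron a c ∧ ⟪η, x⟫ = ⟪η, Z⟫} := by rw [hZG.2]
  have hmaxZ : IsMaxOn (inner ℝ η) (polyhedron a c) Z := fun x hx => hZG.2 ▸ hmax hx
  refine ⟨isFace_of_isMaxOn hX hmax, Set.mem_biUnion hZ ?_⟩
  exact mem_intrinsicInterior_normCone_polyhedron hZG.1 hmaxZ (hGZ ▸ hZ)

end Polyhedron

section Projection

lemma projOn_apply (b : Submodule ℝ E) (x : E) : projOn b x = b.starProjection x := rfl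

lemma projOn_mem (b : Submodule ℝ E) (x : E) : projOn b x ∈ b :=
  b.starProjection_apply_mem x

lemma projOn_eq_projOn_iff {b : Submodule ℝ E} {x y : E} :
    projOn b x = projOn b y ↔ x - y ∈ bᗮ := by
  rw [projOn_apply, projOn_apply, ← sub_eq_zero, ← map_sub, ← Submodule.ker_starProjection]
  rfl

lemma inner_projOn_orthogonal {b : Submodule ℝ E} {η w : E} (hw : w ∈ bᗮ) :
    ⟪projOn bᗮ η, w⟫ = ⟪η, w⟫ := by
  rw [projOn_apply, Submodule.inner_starProjection_left_eq_right,
    Submodule.starProjection_eq_self_iff.mpr hw]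

variable {ι : Type*} [Fintype ι] {a : ι → E} {c : ι → ℝ} {b : Submodule ℝ E} {ξ : E}

lemma eq_of_mem_faces_of_projOn_eq
    (hgen : ∀ F : Set E, IsFace (polyhedron a c) F →
      Module.finrank ℝ (Submodule.span ℝ (projOn bᗮ '' aFplus (polyhedron a c) F)) <
        Module.finrank ℝ bᗮ → ξ ∉ projOn bᗮ '' aFplus (polyhedron a c) F)
    {F₁ F₂ : Set E} (hF₁ : IsFace (polyhedron a c) F₁)
    (hξ₁ : ξ ∈ projOn bᗮ '' aFplus (polyhedron a c) F₁) (hF₂ : IsFace (polyhedron a c) F₂)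
    (hξ₂ : ξ ∈ projOn bᗮ '' aFplus (polyhedron a c) F₂) {H₁ H₂ : E} (hH₁ : H₁ ∈ F₁)
    (hH₂ : H₂ ∈ F₂) (h : projOn b H₁ = projOn b H₂) : H₁ = H₂ := by
  obtain ⟨η₁, hη₁, rfl⟩ := hξ₁
  obtain ⟨η₂, hη₂, hη⟩ := hξ₂
  have hv : H₂ - H₁ ∈ bᗮ := projOn_eq_projOn_iff.mp h.symm
  have hmax₁ := isMaxOn_of_mem_aFplus hF₁.subset hη₁ hH₁
  have hmax₂ := isMaxOn_of_mem_aFplus hF₂.subset hη₂ hH₂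
  -- `η₁` and `η₂` agree on `bᗮ ∋ H₂ - H₁`, and are maximized at `H₁` and `H₂` respectively
  have hH₂max : ⟪η₁, H₂⟫ = ⟪η₁, H₁⟫ := by
    have hagree : ⟪η₁, H₂ - H₁⟫ = ⟪η₂, H₂ - H₁⟫ := by
      rw [← inner_projOn_orthogonal hv, ← hη, inner_projOn_orthogonal hv]
    rw [inner_sub_right, inner_sub_right] at hagree
    linarith [isMaxOn_iff.mp hmax₁ _ (hF₂.subset hH₂), isMaxOn_iff.mp hmax₂ _ (hF₁.subset hH₁)]
  obtain ⟨hG, hη₁G⟩ := isFace_and_mem_aFplus_of_isMaxOn (hF₁.subset hH₁) hmax₁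
  set G := {x | x ∈ polyhedron a c ∧ ⟪η₁, x⟫ = ⟪η₁, H₁⟫}
  have hH₁G : H₁ ∈ G := ⟨hF₁.subset hH₁, rfl⟩
  have hH₂G : H₂ ∈ G := ⟨hF₂.subset hH₂, hH₂max⟩
  -- every `η ∈ 𝔞_G^+` is maximized at both `H₁` and `H₂`, hence orthogonal to `H₂ - H₁`
  have hspan :
      Submodule.span ℝ (projOn bᗮ '' aFplus (polyhedron a c) G) ≤ (ℝ ∙ (H₂ - H₁))ᗮ := by
    rw [Submodule.span_le]
    rintro _ ⟨η, hη, rfl⟩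
    have e₁ := isMaxOn_iff.mp (isMaxOn_of_mem_aFplus (fun _ hx => hx.1) hη hH₁G) _ hH₂G.1
    have e₂ := isMaxOn_iff.mp (isMaxOn_of_mem_aFplus (fun _ hx => hx.1) hη hH₂G) _ hH₁G.1
    rw [SetLike.mem_coe, Submodule.mem_orthogonal_singleton_iff_inner_right, real_inner_comm,
      inner_projOn_orthogonal hv, inner_sub_right]
    linarith
  by_contra hne
  refine hgen G hG (Submodule.finrank_lt_finrank_of_lt ?_) ⟨η₁, hη₁G, rfl⟩
  refine SetLike.lt_iff_le_and_exists.mpr ⟨Submodule.span_le.mpr ?_, H₂ - H₁, hv, fun hmem => ?_⟩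
  · rintro _ ⟨η, -, rfl⟩
    exact projOn_mem _ _
  · have := hspan hmem
    rw [Submodule.mem_orthogonal_singleton_iff_inner_right, inner_self_eq_zero,
      sub_eq_zero] at this
    exact hne this.symm

lemma exists_isMaxOn_projOn_eq (hξ : ξ ∈ projOn bᗮ '' polarCone (asympCone (polyhedron a c)))
    {H₀ : E} (hH₀ : H₀ ∈ polyhedron a c) :
    ∃ H ∈ polyhedron a c, projOn b H = projOn b H₀ ∧
      ∃ η, IsMaxOn (inner ℝ η) (polyhedron a c) H ∧ projOn bᗮ η = ξ := by
  obtain ⟨η₀, hη₀, rfl⟩ := hξ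
  set π := bᗮ.orthogonalProjectionOnto
  have hπ : ∀ (u : E) (y : bᗮ), ⟪π u, y⟫ = ⟪u, (y : E)⟫ := fun u y => by
    rw [Submodule.coe_inner, ← inner_projOn_orthogonal (η := u) y.2]
    rfl
  -- maximize `⟪η₀, ·⟫` over the fibre of `polyhedron a c` through `H₀`, which is the
  -- polyhedron `polyhedron a' c'` in `bᗮ` translated by `H₀`
  set a' : ι → bᗮ := fun i => π (a i)
  set c' : ι → ℝ := fun i => c i - ⟪a i, H₀⟫
  have hle_iff : ∀ (y : bᗮ) i, ⟪a' i, y⟫ ≤ c' i ↔ ⟪a i, H₀ + y⟫ ≤ c i := fun y i => by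
    rw [hπ, inner_add_right, le_sub_iff_add_le, add_comm]
  have heq_iff : ∀ (y : bᗮ) i, ⟪a' i, y⟫ = c' i ↔ ⟪a i, H₀ + y⟫ = c i := fun y i => by
    rw [hπ, inner_add_right, eq_sub_iff_add_eq, add_comm]
  have hfib : ∀ y : bᗮ, y ∈ polyhedron a' c' ↔ H₀ + y ∈ polyhedron a c := fun y =>
    forall_congr' (hle_iff y)
  obtain ⟨y, hy, hmax⟩ := exists_isMaxOn_polyhedron (ξ := π η₀)
    ⟨0, (hfib 0).mpr (by simpa using hH₀)⟩ fun w hw => by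
      rw [hπ]
      exact hη₀ _ (mem_asympCone_polyhedron fun i => hπ (a i) w ▸ hw i)
  have hact : activeNormals a' c' y = π.toLinearMap ∘ activeNormals a c (H₀ + y) :=
    funext fun i => by
      simp only [activeNormals, heq_iff, Function.comp_apply, apply_ite π.toLinearMap, map_zero]
      rfl
  have hcone : π η₀ ∈ conicHull (activeNormals a' c' y) :=
    normCone_polyhedron hy ▸ mem_normCone_iff_isMaxOn.mpr hmax
  rw [hact, conicHull_comp_linearMap] at hcone
  obtain ⟨η, hη, hπη⟩ := hcone
  have hH := (hfib y).mp hy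
  exact ⟨H₀ + y, hH, projOn_eq_projOn_iff.mpr (by simp), η,
    mem_normCone_iff_isMaxOn.mp ((normCone_polyhedron hH).symm ▸ hη), congrArg Subtype.val hπη⟩

end Projection

theorem stmt_7_general (C : Set E) (hC : IsFGConvex C)
    (b : Submodule ℝ E)
    (ξ : E)
    (hξ : ξ ∈ projOn bᗮ '' polarCone (asympCone C))
    (hgen : ∀ F : Set E, IsFace C F →
      Module.finrank ℝ (Submodule.span ℝ (projOn bᗮ '' aFplus C F)) < Module.finrank ℝ bᗮ →
      ξ ∉ projOn bᗮ '' aFplus C F) :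
    Set.BijOn (projOn b)
      (⋃ F ∈ {F : Set E | IsFace C F ∧ ξ ∈ projOn bᗮ '' aFplus C F}, F)
      (projOn b '' C) := by
  obtain ⟨s, rfl⟩ := hC.exists_eq_polyhedron
  refine ⟨fun H hH => ?_, fun H₁ h₁ H₂ h₂ h => ?_, fun _ ⟨H₀, hH₀, hy⟩ => ?_⟩
  · obtain ⟨F, ⟨hF, -⟩, hHF⟩ := Set.mem_iUnion₂.mp hH
    exact Set.mem_image_of_mem _ (hF.subset hHF)
  · obtain ⟨F₁, ⟨hF₁, hξ₁⟩, hH₁⟩ := Set.mem_iUnion₂.mp h₁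
    obtain ⟨F₂, ⟨hF₂, hξ₂⟩, hH₂⟩ := Set.mem_iUnion₂.mp h₂
    exact eq_of_mem_faces_of_projOn_eq hgen hF₁ hξ₁ hF₂ hξ₂ hH₁ hH₂ h
  · obtain ⟨H, hH, hHb, η, hmax, hη⟩ := exists_isMaxOn_projOn_eq hξ hH₀
    obtain ⟨hG, hηG⟩ := isFace_and_mem_aFplus_of_isMaxOn hH hmax
    exact ⟨H, Set.mem_iUnion₂.mpr ⟨_, ⟨hG, η, hηG, hη⟩, hH, rfl⟩, hHb.trans hy⟩

theorem stmt_7 (C : Set E) (hC : IsFGConvex C) (hne : C.Nonempty)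
    (b : Submodule ℝ E)
    (hdim : Module.finrank ℝ
        (Submodule.span ℝ (polarCone (asympCone C) + (b : Set E))) = Module.finrank ℝ E)
    (ξ : E) (hξb : ξ ∈ bᗮ)
    (hξ : ξ ∈ projOn bᗮ '' polarCone (asympCone C))
    (hgen : ∀ F : Set E, IsFace C F →
      Module.finrank ℝ (Submodule.span ℝ (projOn bᗮ '' aFplus C F)) < Module.finrank ℝ bᗮ →
      ξ ∉ projOn bᗮ '' aFplus C F) :
    Set.BijOn (projOn b)
      (⋃ F ∈ {F : Set E | IsFace C F ∧ ξ ∈ projOn bᗮ '' aFplus C F}, F)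
      (projOn b '' C) :=
  stmt_7_general C hC b ξ hξ hgen
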